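/- Let A and B be finite types, let μ₁, ν₁ be probability mass functions on A, and let κ, η : A → (probability mass functions on B) be two kernels, such that ν₁(a) > 0 whenever μ₁(a) > 0, and for every a ∈ A, η(a)(b) > 0 whenever κ(a)(b) > 0. Define the composed probability mass functions μ and ν on A × B by μ(a, b) = μ₁(a)·κ(a)(b) and ν(a, b) = ν₁(a)·η(a)(b). Then for every real λ ≥ 0, log Σ_{(a,b) : μ(a,b)>0} μ(a,b)·(μ(a,b)/ν(a,b))^λ ≤ log Σ_{a : μ₁(a)>0} μ₁(a)·(μ₁(a)/ν₁(a))^λ + max_{a ∈ A} log Σ_{b : κ(a)(b)>0} κ(a)(b)·(κ(a)(b)/η(a)(b))^λ. -/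

import Mathlib

/-!
The privacy-loss ratio of the composed pair factorizes on its support as
`(μ₁ a / ν₁ a) * (κ a b / η a b)`, so the composed moment sum is
`∑ a, μ₁ a * (μ₁ a / ν₁ a) ^ λ * M a`, where `M a` is the moment sum of `(κ a, η a)`.
Bounding every `M a` by `exp (max_a log M a)` and taking logarithms gives the claim.
-/

open Real Finset

noncomputable def privacyLossMGF {α : Type*} [Fintype α] (μ ν : α → ℝ) (lam : ℝ) : ℝ :=
  ∑ o ∈ univ.filter (fun o => 0 < μ o), μ o * (μ o / ν o) ^ lam

theorem exists_pos_of_sum_eq_one {ι : Type*} [Fintype ι] {f : ι → ℝ} (h : ∑ i, f i = 1) :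
    ∃ i, 0 < f i := by
  obtain ⟨i, -, hi⟩ := exists_lt_of_sum_lt (f := 0) (g := f) (s := univ) (by simp [h])
  exact ⟨i, hi⟩

theorem log_sum_mul_le_log_sum_add_sup' {ι : Type*} {s : Finset ι} (hs : s.Nonempty)
    {w f : ι → ℝ} (hw : ∀ i ∈ s, 0 < w i) (hf : ∀ i ∈ s, 0 < f i) :
    log (∑ i ∈ s, w i * f i) ≤ log (∑ i ∈ s, w i) + s.sup' hs (fun i => log (f i)) := by
  set M := s.sup' hs fun i => log (f i)
  have hf_le : ∀ i ∈ s, f i ≤ exp M := fun i hi =>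
    (log_le_iff_le_exp (hf i hi)).mp (le_sup' (fun i => log (f i)) hi)
  calc log (∑ i ∈ s, w i * f i)
      ≤ log ((∑ i ∈ s, w i) * exp M) := by
        refine log_le_log (sum_pos (fun i hi => mul_pos (hw i hi) (hf i hi)) hs) ?_
        rw [sum_mul]
        exact sum_le_sum fun i hi => mul_le_mul_of_nonneg_left (hf_le i hi) (hw i hi).le
    _ = log (∑ i ∈ s, w i) + M := by
        rw [log_mul (sum_pos hw hs).ne' (exp_pos M).ne', log_exp]

theorem privacyLossMGF_term_pos {α : Type*} {μ ν : α → ℝ} (hμν : ∀ o, 0 < μ o → 0 < ν o)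
    (lam : ℝ) {o : α} (ho : 0 < μ o) : 0 < μ o * (μ o / ν o) ^ lam := by
  have := hμν o ho
  positivity

section privacyLossMGF

variable {α β : Type*} [Fintype α] [Fintype β]

theorem privacyLossMGF_pos {μ ν : α → ℝ} (hμ : ∃ o, 0 < μ o)
    (hμν : ∀ o, 0 < μ o → 0 < ν o) (lam : ℝ) : 0 < privacyLossMGF μ ν lam := by
  obtain ⟨o, ho⟩ := hμ
  exact sum_pos (fun o ho => privacyLossMGF_term_pos hμν lam (mem_filter.mp ho).2)
    ⟨o, mem_filter.mpr ⟨mem_univ o, ho⟩⟩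

theorem privacyLossMGF_comp {μ ν : α → ℝ} {κ η : α → β → ℝ} (hκ : ∀ a b, 0 ≤ κ a b)
    (hμν : ∀ a, 0 < μ a → 0 < ν a) (hκη : ∀ a b, 0 < κ a b → 0 < η a b) (lam : ℝ) :
    privacyLossMGF (fun p : α × β => μ p.1 * κ p.1 p.2) (fun p => ν p.1 * η p.1 p.2) lam =
      ∑ a ∈ univ.filter (fun a => 0 < μ a),
        μ a * (μ a / ν a) ^ lam * privacyLossMGF (κ a) (η a) lam := by
  unfold privacyLossMGF
  rw [sum_filter, Fintype.sum_prod_type, sum_filter]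
  refine sum_congr rfl fun a _ => ?_
  split_ifs with ha
  · rw [mul_sum, sum_filter]
    refine sum_congr rfl fun b _ => ?_
    simp only [mul_pos_iff_of_pos_left ha]
    split_ifs with hb
    · rw [← div_mul_div_comm, mul_rpow (div_pos ha (hμν a ha)).le (div_pos hb (hκη a b hb)).le]
      ring
    · rfl
  · exact sum_eq_zero fun b _ =>
      if_neg (not_lt.mpr (mul_nonpos_of_nonpos_of_nonneg (not_lt.mp ha) (hκ a b)))

end privacyLossMGF

theorem moments_accountant_adaptive_composability_general
    {A B : Type*} [Fintype A] [Fintype B] [Nonempty A]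
    (μ₁ ν₁ : A → ℝ) (κ η : A → B → ℝ)
    (hμ₁1 : ∑ a, μ₁ a = 1)
    (hκ0 : ∀ a b, 0 ≤ κ a b) (hκ1 : ∀ a, ∑ b, κ a b = 1)
    (hsupp₁ : ∀ a, 0 < μ₁ a → 0 < ν₁ a)
    (hsupp₂ : ∀ a b, 0 < κ a b → 0 < η a b)
    (lam : ℝ) :
    Real.log (∑ p ∈ Finset.univ.filter (fun p : A × B => 0 < μ₁ p.1 * κ p.1 p.2),
        (μ₁ p.1 * κ p.1 p.2) * ((μ₁ p.1 * κ p.1 p.2) / (ν₁ p.1 * η p.1 p.2)) ^ lam) ≤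
      Real.log (∑ a ∈ Finset.univ.filter (fun a => 0 < μ₁ a),
          μ₁ a * (μ₁ a / ν₁ a) ^ lam) +
      Finset.univ.sup' Finset.univ_nonempty (fun a =>
        Real.log (∑ b ∈ Finset.univ.filter (fun b => 0 < κ a b),
          κ a b * (κ a b / η a b) ^ lam)) := by
  change log (privacyLossMGF _ _ lam) ≤ log (privacyLossMGF μ₁ ν₁ lam) +
    univ.sup' univ_nonempty fun a => log (privacyLossMGF (κ a) (η a) lam)
  obtain ⟨a₀, ha₀⟩ := exists_pos_of_sum_eq_one hμ₁1
  have hS : (univ.filter fun a => 0 < μ₁ a).Nonempty := ⟨a₀, mem_filter.mpr ⟨mem_univ a₀, ha₀⟩⟩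
  rw [privacyLossMGF_comp hκ0 hsupp₁ hsupp₂]
  calc _ ≤ log (privacyLossMGF μ₁ ν₁ lam) +
        (univ.filter fun a => 0 < μ₁ a).sup' hS fun a => log (privacyLossMGF (κ a) (η a) lam) :=
        log_sum_mul_le_log_sum_add_sup' hS
          (fun a ha => privacyLossMGF_term_pos hsupp₁ lam (mem_filter.mp ha).2)
          (fun a _ => privacyLossMGF_pos (exists_pos_of_sum_eq_one (hκ1 a)) (hsupp₂ a) lam)
    _ ≤ _ := by gcongr; exact subset_univ _

/-- Composability of the moments accountant for two-fold adaptive composition: the log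
moment generating function of the privacy loss of the composed pair is at most the sum of
that of the first pair and the worst case (over auxiliary inputs) of that of the second. -/
theorem moments_accountant_adaptive_composability
    {A B : Type*} [Fintype A] [Fintype B] [Nonempty A]
    (μ₁ ν₁ : A → ℝ) (κ η : A → B → ℝ)
    (hμ₁0 : ∀ a, 0 ≤ μ₁ a) (hμ₁1 : ∑ a, μ₁ a = 1)
    (hν₁0 : ∀ a, 0 ≤ ν₁ a) (hν₁1 : ∑ a, ν₁ a = 1)
    (hκ0 : ∀ a b, 0 ≤ κ a b) (hκ1 : ∀ a, ∑ b, κ a b = 1)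
    (hη0 : ∀ a b, 0 ≤ η a b) (hη1 : ∀ a, ∑ b, η a b = 1)
    (hsupp₁ : ∀ a, 0 < μ₁ a → 0 < ν₁ a)
    (hsupp₂ : ∀ a b, 0 < κ a b → 0 < η a b)
    (lam : ℝ) (hlam : 0 ≤ lam) :
    Real.log (∑ p ∈ Finset.univ.filter (fun p : A × B => 0 < μ₁ p.1 * κ p.1 p.2),
        (μ₁ p.1 * κ p.1 p.2) * ((μ₁ p.1 * κ p.1 p.2) / (ν₁ p.1 * η p.1 p.2)) ^ lam) ≤
      Real.log (∑ a ∈ Finset.univ.filter (fun a => 0 < μ₁ a),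
          μ₁ a * (μ₁ a / ν₁ a) ^ lam) +
      Finset.univ.sup' Finset.univ_nonempty (fun a =>
        Real.log (∑ b ∈ Finset.univ.filter (fun b => 0 < κ a b),
          κ a b * (κ a b / η a b) ^ lam)) :=
  moments_accountant_adaptive_composability_general μ₁ ν₁ κ η hμ₁1 hκ0 hκ1 hsupp₁ hsupp₂ lam
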